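/- arXiv:hep-th/9208008 — 5 statements merged into one kernel-verified Lean document; each statement's English description precedes it below -/
import Mathlib

section
/- Let H be a Hopf algebra over a commutative ring with adjoint bracket [h,g] = Σ h₍₁₎ g S(h₍₂₎). Then the 'braided Jacobi' identities hold: (L1) [ξ, [η, ζ]] = Σ [[ξ₍₁₎, η], [ξ₍₂₎, ζ]] and (L2) [[ξ, η], ζ] = Σ [ξ₍₁₎, [η, [S(ξ₍₂₎), ζ]]] for all ξ, η, ζ ∈ H. -/
open TensorProduct

variable (k : Type*) [CommRing k] (H : Type*) [Ring H] [HopfAlgebra k H]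

/-- The adjoint action of a Hopf algebra on itself, as a linear map on the tensor square:
`adjT (h ⊗ g) = Σ h₍₁₎ g S(h₍₂₎)`. -/
noncomputable def adjT : H ⊗[k] H →ₗ[k] H :=
  LinearMap.mul' k H ∘ₗ
  LinearMap.rTensor H (LinearMap.mul' k H) ∘ₗ
  (TensorProduct.assoc k H H H).symm.toLinearMap ∘ₗ
  LinearMap.lTensor H (TensorProduct.comm k H H).toLinearMap ∘ₗ
  (TensorProduct.assoc k H H H).toLinearMap ∘ₗ
  LinearMap.rTensor H (LinearMap.lTensor H (HopfAlgebra.antipode (R := k))) ∘ₗ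
  LinearMap.rTensor H (Coalgebra.comul (R := k))

/-- `adjL g : h ↦ [h, g]`. -/
noncomputable def adjL (g : H) : H →ₗ[k] H :=
  adjT k H ∘ₗ (TensorProduct.mk k H H).flip g

/-- `adjR h : g ↦ [h, g]`. -/
noncomputable def adjR (h : H) : H →ₗ[k] H :=
  adjT k H ∘ₗ TensorProduct.mk k H H h

/-!
The bracket is an action of the algebra `H` on itself, `[x y, z] = [x, [y, z]]`, because the
antipode is antimultiplicative; and coassociativity with the antipode axiom give
`ξ η = Σ [ξ₍₁₎, η] ξ₍₂₎`. Letting both sides of this act on `ζ` gives (L1), and letting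
`[ξ, η] = Σ ξ₍₁₎ η S(ξ₍₂₎)` act on `ζ` gives (L2).
-/

open Coalgebra HopfAlgebra

section

variable {k H}

lemma adjT_tmul_eq_sum {ι : Type*} (h g : H) (r : Repr k h ι) :
    adjT k H (h ⊗ₜ[k] g) = ∑ i ∈ r.index, r.left i * g * antipode k (r.right i) := by
  simp only [adjT, LinearMap.comp_apply, LinearMap.rTensor_tmul, ← r.eq]
  simp [TensorProduct.sum_tmul, mul_assoc]

lemma adjT_mul_tmul (x y z : H) :
    adjT k H ((x * y) ⊗ₜ[k] z) = adjT k H (x ⊗ₜ[k] adjT k H (y ⊗ₜ[k] z)) := by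
  simp only [adjT_tmul_eq_sum _ _ ((ℛ k x).mul (ℛ k y)), adjT_tmul_eq_sum x _ (ℛ k x),
    adjT_tmul_eq_sum y z (ℛ k y), Repr.mul_index, Repr.mul_left, Repr.mul_right,
    Finset.sum_product, antipode_mul_antidistrib, Finset.sum_mul, Finset.mul_sum, mul_assoc]

lemma sum_adjT_tmul_mul {ι : Type*} (g x : H) (r : Repr k x ι) :
    ∑ i ∈ r.index, adjT k H (r.left i ⊗ₜ[k] g) * r.right i = x * g := by
  have coassoc := sum_map_tmul_tmul_eq (LinearMap.mulRight k g) (antipode k) LinearMap.id x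
    (repr := r) (a₁ := fun i ↦ ℛ k (r.left i)) (a₂ := fun i ↦ ℛ k (r.right i))
  have counit_right := congr(TensorProduct.rid k H
    $(sum_map_tmul_counit_eq (LinearMap.mulRight k g) x (repr := r)))
  calc ∑ i ∈ r.index, adjT k H (r.left i ⊗ₜ[k] g) * r.right i
      = ∑ i ∈ r.index, ∑ j ∈ (ℛ k (r.left i)).index,
          (ℛ k (r.left i)).left j * g * antipode k ((ℛ k (r.left i)).right j) * r.right i := by
        simp only [adjT_tmul_eq_sum _ g (ℛ k _), Finset.sum_mul]
    _ = ∑ i ∈ r.index, ∑ j ∈ (ℛ k (r.right i)).index,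
          r.left i * g * antipode k ((ℛ k (r.right i)).left j) * (ℛ k (r.right i)).right j := by
        simpa [map_sum, mul_assoc] using
          congr(LinearMap.mul' k H (LinearMap.lTensor H (LinearMap.mul' k H) $coassoc)).symm
    _ = ∑ i ∈ r.index, counit (R := k) (r.right i) • (r.left i * g) := by
        simp only [mul_assoc _ (antipode k _), ← Finset.mul_sum,
          sum_antipode_mul_eq_algebraMap_counit, ← Algebra.commutes, ← Algebra.smul_def]
    _ = x * g := by simpa using counit_right

end

/-- The braided Jacobi identities for the adjoint bracket `[h,g] = Σ h₍₁₎ g S(h₍₂₎)` of a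
Hopf algebra: (L1) `[ξ, [η, ζ]] = Σ [[ξ₍₁₎, η], [ξ₍₂₎, ζ]]` and
(L2) `[[ξ, η], ζ] = Σ [ξ₍₁₎, [η, [S(ξ₍₂₎), ζ]]]`. -/
theorem adjoint_bracket_braided_jacobi :
    (∀ ξ η ζ : H,
      adjT k H (ξ ⊗ₜ[k] adjT k H (η ⊗ₜ[k] ζ)) =
        adjT k H
          (TensorProduct.map (adjL k H η) (adjL k H ζ) (Coalgebra.comul (R := k) ξ))) ∧
    (∀ ξ η ζ : H,
      adjT k H (adjT k H (ξ ⊗ₜ[k] η) ⊗ₜ[k] ζ) =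
        adjT k H
          (TensorProduct.map LinearMap.id
            (adjR k H η ∘ₗ adjL k H ζ ∘ₗ HopfAlgebra.antipode (R := k))
            (Coalgebra.comul (R := k) ξ))) := by
  refine ⟨fun ξ η ζ ↦ ?_, fun ξ η ζ ↦ ?_⟩
  · rw [← adjT_mul_tmul, ← sum_adjT_tmul_mul η ξ (ℛ k ξ), ← (ℛ k ξ).eq]
    simp only [TensorProduct.sum_tmul, map_sum, TensorProduct.map_tmul, adjL,
      LinearMap.comp_apply, LinearMap.flip_apply, TensorProduct.mk_apply, adjT_mul_tmul]
  · rw [adjT_tmul_eq_sum ξ η (ℛ k ξ), ← (ℛ k ξ).eq]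
    simp only [TensorProduct.sum_tmul, map_sum, TensorProduct.map_tmul, adjL, adjR,
      LinearMap.comp_apply, LinearMap.flip_apply, TensorProduct.mk_apply, LinearMap.id_apply,
      adjT_mul_tmul]
end

section
/- Let u be a real Lie algebra and g = ℂ ⊗_ℝ u its complexification, regarded as a real Lie algebra. Let g ⋉ g denote the semidirect sum of g acting on itself by the adjoint action, i.e. the bracket on g ⊕ g given by [ζ⊕ξ, ζ'⊕ξ'] = ([ζ,ζ'] + [ξ,ζ'] − [ξ',ζ]) ⊕ [ξ,ξ']. Then the map φ : g → g ⋉ g defined by φ(ξ₁ + iξ₂) = (2iξ₂) ⊕ (ξ₁ − iξ₂) for ξ₁, ξ₂ ∈ u is an injective homomorphism of real Lie algebras. -/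
/-!
With `x ↦ x̄` the complex conjugation of `g = ℂ ⊗_ℝ u`, the map is `φ x = (x - x̄, x̄)`, which
is injective because `x̄` determines `x`. Conjugation is a real Lie algebra automorphism, and for
any Lie ring the semidirect sum bracket of `(x - a, a)` and `(y - b, b)` is
`([x, y] - [a, b], [a, b])`; with `a = x̄`, `b = ȳ` this is `φ [x, y]`.
-/

open scoped TensorProduct

/-- The semidirect sum bracket `[ζ⊕ξ, ζ'⊕ξ'] = ([ζ,ζ'] + [ξ,ζ'] − [ξ',ζ]) ⊕ [ξ,ξ']`
on `g ⊕ g` (the second copy acting on the first by the adjoint action). -/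
def sdSumBracket {g : Type*} [LieRing g] (p q : g × g) : g × g :=
  (⁅p.1, q.1⁆ + ⁅p.2, q.1⁆ - ⁅q.2, p.1⁆, ⁅p.2, q.2⁆)

theorem sdSumBracket_sub_prod {g : Type*} [LieRing g] (x a y b : g) :
    sdSumBracket (x - a, a) (y - b, b) = (⁅x, y⁆ - ⁅a, b⁆, ⁅a, b⁆) := by
  refine Prod.ext ?_ rfl
  simp only [sdSumBracket, lie_sub, sub_lie, ← lie_skew b x, ← lie_skew b a]
  abel

namespace Complexification

variable {M : Type*} [AddCommGroup M] [Module ℝ M]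

theorem exists_eq_one_tmul_add_I_tmul (x : ℂ ⊗[ℝ] M) :
    ∃ ξ₁ ξ₂ : M, x = (1 : ℂ) ⊗ₜ[ℝ] ξ₁ + Complex.I ⊗ₜ[ℝ] ξ₂ := by
  induction x using TensorProduct.induction_on with
  | zero => exact ⟨0, 0, by simp⟩
  | tmul c ξ =>
    refine ⟨c.re • ξ, c.im • ξ, ?_⟩
    rw [TensorProduct.tmul_smul, TensorProduct.tmul_smul, TensorProduct.smul_tmul',
      TensorProduct.smul_tmul', ← TensorProduct.add_tmul]
    simp [Complex.real_smul, Complex.re_add_im]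
  | add x y hx hy =>
    obtain ⟨ξ₁, ξ₂, rfl⟩ := hx
    obtain ⟨η₁, η₂, rfl⟩ := hy
    exact ⟨ξ₁ + η₁, ξ₂ + η₂, by simp only [TensorProduct.tmul_add]; abel⟩

variable {u : Type*} [LieRing u] [LieAlgebra ℝ u]

noncomputable def conj : ℂ ⊗[ℝ] u →ₗ⁅ℝ⁆ ℂ ⊗[ℝ] u :=
  LieAlgebra.ExtendScalars.map Complex.conjAe.toAlgHom (LieHom.id)

theorem conj_one_tmul_add_I_tmul (ξ₁ ξ₂ : u) :
    conj ((1 : ℂ) ⊗ₜ[ℝ] ξ₁ + Complex.I ⊗ₜ[ℝ] ξ₂) =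
      (1 : ℂ) ⊗ₜ[ℝ] ξ₁ - Complex.I ⊗ₜ[ℝ] ξ₂ := by
  simp [conj, TensorProduct.neg_tmul, sub_eq_add_neg]

end Complexification

open Complexification in
/-- Let `u` be a real Lie algebra and `g = ℂ ⊗_ℝ u` its complexification, regarded as a
real Lie algebra.  The map `φ : g → g ⋉ g`, `φ(ξ₁ + iξ₂) = (2iξ₂) ⊕ (ξ₁ − iξ₂)`, is an
injective homomorphism of real Lie algebras into the semidirect sum `g ⋉ g`. -/
theorem complexification_embeds_in_semidirect_sum
    {u : Type*} [LieRing u] [LieAlgebra ℝ u]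
    (φ : (ℂ ⊗[ℝ] u) →ₗ[ℝ] (ℂ ⊗[ℝ] u) × (ℂ ⊗[ℝ] u))
    (hφ : ∀ ξ₁ ξ₂ : u,
      φ ((1 : ℂ) ⊗ₜ[ℝ] ξ₁ + Complex.I ⊗ₜ[ℝ] ξ₂) =
        ((2 : ℝ) • (Complex.I ⊗ₜ[ℝ] ξ₂),
          (1 : ℂ) ⊗ₜ[ℝ] ξ₁ - Complex.I ⊗ₜ[ℝ] ξ₂)) :
    Function.Injective φ ∧
      ∀ x y : ℂ ⊗[ℝ] u, φ ⁅x, y⁆ = sdSumBracket (φ x) (φ y) := by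
  have hφ_conj : ∀ x, φ x = (x - conj x, conj x) := by
    intro x
    obtain ⟨ξ₁, ξ₂, rfl⟩ := exists_eq_one_tmul_add_I_tmul x
    rw [hφ, conj_one_tmul_add_I_tmul, two_smul]
    congr 1
    abel
  refine ⟨fun x y hxy => ?_, fun x y => ?_⟩
  · rw [hφ_conj, hφ_conj, Prod.mk.injEq] at hxy
    simpa [hxy.2] using hxy.1
  · rw [hφ_conj, hφ_conj, hφ_conj, sdSumBracket_sub_prod, LieHom.map_lie]
end

section
/- Let q be invertible with q² ≠ 1. In the algebra B generated by a, b, c, d with relations ba = q²ab, ca = q⁻²ac, da = ad, bc = cb + (1 − q⁻²)a(d − a), db = bd + (1 − q⁻²)ab, cd = dc + (1 − q⁻²)ca (the braided matrices BM_q(2)), the elements q⁻¹a + qd and ad − q²cb are central. -/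
/-- In the braided matrices `BM_q(2)` — the algebra with generators `a, b, c, d` and
relations `ba = q²ab`, `ca = q⁻²ac`, `da = ad`, `bc = cb + (1−q⁻²)a(d−a)`,
`db = bd + (1−q⁻²)ab`, `cd = dc + (1−q⁻²)ca` — the elements `q⁻¹a + qd` and
`ad − q²cb` are central (commute with each of `a, b, c, d`). -/
theorem braided_matrix_central_elements {k : Type*} [Field k] (q : k) (hq : q ≠ 0)
    (hq2 : q ^ 2 ≠ 1)
    {B : Type*} [Ring B] [Algebra k B] (a b c d : B)
    (hba : b * a = (q ^ 2) • (a * b))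
    (hca : c * a = (q⁻¹ ^ 2) • (a * c))
    (hda : d * a = a * d)
    (hbc : b * c = c * b + (1 - q⁻¹ ^ 2) • (a * (d - a)))
    (hdb : d * b = b * d + (1 - q⁻¹ ^ 2) • (a * b))
    (hcd : c * d = d * c + (1 - q⁻¹ ^ 2) • (c * a)) :
    (∀ x ∈ ({a, b, c, d} : Set B),
      (q⁻¹ • a + q • d) * x = x * (q⁻¹ • a + q • d)) ∧
    (∀ x ∈ ({a, b, c, d} : Set B),
      (a * d - (q ^ 2) • (c * b)) * x = x * (a * d - (q ^ 2) • (c * b))) := by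
  have hba' : ∀ x : B, b * (a * x) = (q ^ 2) • (a * (b * x)) := fun x => by
    rw [← mul_assoc, hba, smul_mul_assoc, mul_assoc]
  have hca' : ∀ x : B, c * (a * x) = (q⁻¹ ^ 2) • (a * (c * x)) := fun x => by
    rw [← mul_assoc, hca, smul_mul_assoc, mul_assoc]
  have hda' : ∀ x : B, d * (a * x) = a * (d * x) := fun x => by
    rw [← mul_assoc, hda, mul_assoc]
  have hbc' : ∀ x : B, b * (c * x) =
      c * (b * x) + (1 - q⁻¹ ^ 2) • (a * (d * x)) - (1 - q⁻¹ ^ 2) • (a * (a * x)) := fun x => by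
    rw [← mul_assoc, hbc, add_mul, smul_mul_assoc, mul_assoc, mul_sub, sub_mul, mul_assoc,
      mul_assoc, smul_sub]
    abel
  have hdb' : ∀ x : B, d * (b * x) = b * (d * x) + (1 - q⁻¹ ^ 2) • (a * (b * x)) := fun x => by
    rw [← mul_assoc, hdb, add_mul, smul_mul_assoc, mul_assoc, mul_assoc]
  have hdc : d * c = c * d - (1 - q⁻¹ ^ 2) • (c * a) := by rw [hcd]; abel
  have hdc' : ∀ x : B, d * (c * x) = c * (d * x) - (1 - q⁻¹ ^ 2) • (c * (a * x)) := fun x => by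
    rw [← mul_assoc, hdc, sub_mul, smul_mul_assoc, mul_assoc, mul_assoc]
  constructor <;>
    · rintro x hx
      simp only [Set.mem_insert_iff, Set.mem_singleton_iff] at hx
      rcases hx with rfl | rfl | rfl | rfl <;>
        · simp only [add_mul, mul_add, sub_mul, mul_sub, smul_mul_assoc, mul_smul_comm,
            smul_add, smul_sub, smul_smul, mul_assoc, hba, hca, hda, hbc, hdb, hcd,
            hba', hca', hda', hbc', hdb', hdc']
          all_goals match_scalars <;> (try field_simp) <;> (try ring) <;>
            simp [← mul_pow, mul_inv_cancel₀ hq] <;> field_simp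
end

section
/- Let g be a finite-dimensional Lie algebra over a field k of characteristic 0, and let r ∈ g ⊗ g, viewed as a linear map r : g* → g via r(η) = Σ ⟨η, r⁽¹⁾⟩ r⁽²⁾. Suppose r satisfies the classical Yang–Baxter equation [r₁₂, r₁₃] + [r₁₂, r₂₃] + [r₁₃, r₂₃] = 0. Define a bracket on g* by ⟨[η, η'], ξ⟩ = ⟨η ⊗ η', δξ⟩ where δξ = Σ [ξ, r⁽¹⁾] ⊗ r⁽²⁾ + r⁽¹⁾ ⊗ [ξ, r⁽²⁾]. Then r : g* → g intertwines the brackets up to reversal: r([η', η]) = [r(η'), r(η)] for all η, η' ∈ g*. -/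
open scoped TensorProduct

section

variable {k : Type*} [Field k] {g : Type*} [LieRing g] [LieAlgebra k g]

/-- The coboundary cobracket `δξ = Σ [ξ, r⁽¹⁾] ⊗ r⁽²⁾ + r⁽¹⁾ ⊗ [ξ, r⁽²⁾]` determined by
`r ∈ g ⊗ g`. -/
noncomputable def cobracket (r : g ⊗[k] g) : g →ₗ[k] g ⊗[k] g :=
  LinearMap.applyₗ r ∘ₗ
    ((LinearMap.rTensorHom g + LinearMap.lTensorHom g :
        (g →ₗ[k] g) →ₗ[k] (g ⊗[k] g →ₗ[k] g ⊗[k] g)) ∘ₗ LieAlgebra.ad k g)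

/-- The bracket on `g*` defined by `⟨[η, η'], ξ⟩ = ⟨η ⊗ η', δξ⟩`. -/
noncomputable def dualBracket (r : g ⊗[k] g) (η η' : Module.Dual k g) :
    Module.Dual k g :=
  TensorProduct.lift (η.smulRight η') ∘ₗ cobracket r

/-- `r ∈ g ⊗ g` viewed as a linear map `g* → g`, `r(η) = Σ ⟨η, r⁽¹⁾⟩ r⁽²⁾`. -/
noncomputable def rAsMap (r : g ⊗[k] g) (η : Module.Dual k g) : g :=
  TensorProduct.lid k g (LinearMap.rTensor g η r)

end

section

variable {k : Type*} [Field k] {g : Type*} [LieRing g] [LieAlgebra k g]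
  {ι : Type*} [Fintype ι] (x y : ι → g)

lemma rAsMap_sum_tmul (η : Module.Dual k g) :
    rAsMap (∑ i, x i ⊗ₜ[k] y i) η = ∑ i, η (x i) • y i := by
  simp [rAsMap]

lemma dualBracket_sum_tmul_apply (η η' : Module.Dual k g) (ξ : g) :
    dualBracket (∑ i, x i ⊗ₜ[k] y i) η η' ξ =
      ∑ i, (η ⁅ξ, x i⁆ * η' (y i) + η (x i) * η' ⁅ξ, y i⁆) := by
  simp [dualBracket, cobracket]

lemma rAsMap_dualBracket_sum_tmul (η η' : Module.Dual k g) :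
    rAsMap (∑ i, x i ⊗ₜ[k] y i) (dualBracket (∑ i, x i ⊗ₜ[k] y i) η' η) =
      -∑ i, ∑ j, ((η' ⁅x i, x j⁆ * η (y i)) • y j + (η' (x i) * η ⁅y i, x j⁆) • y j) := by
  rw [rAsMap_sum_tmul, Finset.sum_comm, ← Finset.sum_neg_distrib]
  refine Finset.sum_congr rfl fun j _ => ?_
  rw [dualBracket_sum_tmul_apply, Finset.sum_smul, ← Finset.sum_neg_distrib]
  refine Finset.sum_congr rfl fun i _ => ?_
  rw [← lie_skew (x i) (x j), ← lie_skew (y i) (x j), map_neg, map_neg]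
  module

lemma lie_rAsMap_sum_tmul (η η' : Module.Dual k g) :
    ⁅rAsMap (∑ i, x i ⊗ₜ[k] y i) η', rAsMap (∑ i, x i ⊗ₜ[k] y i) η⁆ =
      ∑ i, ∑ j, (η' (x i) * η (x j)) • ⁅y i, y j⁆ := by
  rw [rAsMap_sum_tmul, rAsMap_sum_tmul, sum_lie_sum]
  simp_rw [smul_lie, lie_smul, smul_smul]

/- Apply `η' ⊗ η ⊗ id` to the Yang–Baxter equation; the first two resulting terms make up
`-r([η', η])` and the third is `[r(η'), r(η)]`. -/
lemma cybe_contract_eq_zero (hCYBE : ∑ i, ∑ j,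
        (⁅x i, x j⁆ ⊗ₜ[k] (y i ⊗ₜ[k] y j) +
          x i ⊗ₜ[k] (⁅y i, x j⁆ ⊗ₜ[k] y j) +
          x i ⊗ₜ[k] (x j ⊗ₜ[k] ⁅y i, y j⁆)) = (0 : g ⊗[k] (g ⊗[k] g)))
    (η η' : Module.Dual k g) :
    ∑ i, ∑ j, ((η' ⁅x i, x j⁆ * η (y i)) • y j + (η' (x i) * η ⁅y i, x j⁆) • y j +
      (η' (x i) * η (x j)) • ⁅y i, y j⁆) = 0 := by
  simpa [smul_smul] using congrArg
    (TensorProduct.lift (η'.smulRight (TensorProduct.lift (η.smulRight LinearMap.id)))) hCYBE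

end

theorem cybe_r_intertwines_brackets_general
    {k : Type*} [Field k] {g : Type*} [LieRing g] [LieAlgebra k g]
    (r : g ⊗[k] g) {ι : Type*} [Fintype ι] (x y : ι → g)
    (hr : r = ∑ i, x i ⊗ₜ[k] y i)
    (hCYBE : ∑ i, ∑ j,
        (⁅x i, x j⁆ ⊗ₜ[k] (y i ⊗ₜ[k] y j) +
          x i ⊗ₜ[k] (⁅y i, x j⁆ ⊗ₜ[k] y j) +
          x i ⊗ₜ[k] (x j ⊗ₜ[k] ⁅y i, y j⁆)) = (0 : g ⊗[k] (g ⊗[k] g))) :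
    ∀ η η' : Module.Dual k g,
      rAsMap r (dualBracket r η' η) = ⁅rAsMap r η', rAsMap r η⁆ := by
  intro η η'
  subst hr
  rw [rAsMap_dualBracket_sum_tmul, lie_rAsMap_sum_tmul, neg_eq_iff_add_eq_zero,
    ← Finset.sum_add_distrib]
  simp_rw [← Finset.sum_add_distrib]
  exact cybe_contract_eq_zero x y hCYBE η η'

/-- Let `g` be a finite-dimensional Lie algebra over a field of characteristic `0` and
`r ∈ g ⊗ g` a solution of the classical Yang–Baxter equation
`[r₁₂, r₁₃] + [r₁₂, r₂₃] + [r₁₃, r₂₃] = 0`.  Then `r : g* → g` intertwines the induced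
bracket on `g*` up to reversal: `r([η', η]) = [r(η'), r(η)]`. -/
theorem cybe_r_intertwines_brackets
    {k : Type*} [Field k] [CharZero k] {g : Type*} [LieRing g] [LieAlgebra k g]
    [FiniteDimensional k g]
    (r : g ⊗[k] g) {ι : Type*} [Fintype ι] (x y : ι → g)
    (hr : r = ∑ i, x i ⊗ₜ[k] y i)
    (hCYBE : ∑ i, ∑ j,
        (⁅x i, x j⁆ ⊗ₜ[k] (y i ⊗ₜ[k] y j) +
          x i ⊗ₜ[k] (⁅y i, x j⁆ ⊗ₜ[k] y j) +
          x i ⊗ₜ[k] (x j ⊗ₜ[k] ⁅y i, y j⁆)) = (0 : g ⊗[k] (g ⊗[k] g))) :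
    ∀ η η' : Module.Dual k g,
      rAsMap r (dualBracket r η' η) = ⁅rAsMap r η', rAsMap r η⁆ :=
  cybe_r_intertwines_brackets_general r x y hr hCYBE
end

section
/- Let u be the real Lie algebra with basis J₁, J₂, J₃ and brackets [Jᵢ, Jⱼ] = ε_{ijk} J_k (so u ≅ su(2) up to scaling), and let g = u ⊕ iu be its complexification with additional generators Kᵢ = iJᵢ satisfying [Jᵢ, Kⱼ] = ε_{ijk} K_k and [Kᵢ, Kⱼ] = −ε_{ijk} J_k. Then the map into the semidirect sum g ⋉ g (bracket [ζ⊕ξ, ζ'⊕ξ'] = ([ζ,ζ'] + [ξ,ζ'] − [ξ',ζ]) ⊕ [ξ,ξ']) defined by Jᵢ ↦ 0 ⊕ Jᵢ and Kᵢ ↦ 2Kᵢ ⊕ (−Kᵢ), extended ℝ-linearly, is an injective homomorphism of real Lie algebras. -/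
open scoped TensorProduct

/-- The totally antisymmetric Levi-Civita symbol on `Fin 3` with `ε₁₂₃ = 1`. -/
def leviCivita : Fin 3 → Fin 3 → Fin 3 → ℝ := fun i j k =>
  if (i, j, k) = (0, 1, 2) ∨ (i, j, k) = (1, 2, 0) ∨ (i, j, k) = (2, 0, 1) then 1
  else if (i, j, k) = (0, 2, 1) ∨ (i, j, k) = (2, 1, 0) ∨ (i, j, k) = (1, 0, 2) then -1
  else 0

/-! Writing `σ` for complex conjugation on `ℂ ⊗[ℝ] u`, the prescribed map is `w ↦ (w - σ w, σ w)`.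
Since `σ` is an automorphism of the real Lie algebra `ℂ ⊗[ℝ] u`, the semidirect-sum bracket of two
such pairs telescopes to `(⁅x, y⁆ - σ ⁅x, y⁆, σ ⁅x, y⁆)`; injectivity holds because the two
components sum to `w`. -/

theorem sdSumBracket_sub_self {L : Type*} [LieRing L] (σ : L → L)
    (hσ : ∀ x y, σ ⁅x, y⁆ = ⁅σ x, σ y⁆) (x y : L) :
    sdSumBracket (x - σ x, σ x) (y - σ y, σ y) = (⁅x, y⁆ - σ ⁅x, y⁆, σ ⁅x, y⁆) := by
  simp only [hσ, sdSumBracket, sub_lie, lie_sub]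
  rw [← lie_skew (σ y) x, ← lie_skew (σ y) (σ x)]
  congr 1
  abel

theorem LinearMap.injective_prod_id_sub {R M : Type*} [Ring R] [AddCommGroup M] [Module R M]
    (f : M →ₗ[R] M) : Function.Injective ((LinearMap.id - f).prod f) := by
  intro x y h
  simpa using congr($h.1 + $h.2)

theorem AlgHom.rTensor_lie {R A B L : Type*} [CommRing R] [CommRing A] [Algebra R A]
    [CommRing B] [Algebra R B] [LieRing L] [LieAlgebra R L] (f : A →ₐ[R] B) (x y : A ⊗[R] L) :
    f.toLinearMap.rTensor L ⁅x, y⁆ = ⁅f.toLinearMap.rTensor L x, f.toLinearMap.rTensor L y⁆ :=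
  (LieAlgebra.ExtendScalars.map f (LieHom.id : L →ₗ⁅R⁆ L)).map_lie x y

theorem eq_prod_sub_conj_of_basis {ι M : Type*} [AddCommGroup M] [Module ℝ M]
    (b : Module.Basis ι ℝ M) (φ : ℂ ⊗[ℝ] M →ₗ[ℝ] (ℂ ⊗[ℝ] M) × (ℂ ⊗[ℝ] M))
    (h1 : ∀ i, φ (1 ⊗ₜ b i) = (0, 1 ⊗ₜ b i))
    (hI : ∀ i, φ (Complex.I ⊗ₜ b i) = ((2 : ℝ) • (Complex.I ⊗ₜ b i), -(Complex.I ⊗ₜ b i))) :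
    φ = (LinearMap.id - Complex.conjAe.toLinearMap.rTensor M).prod
      (Complex.conjAe.toLinearMap.rTensor M) := by
  refine (Complex.basisOneI.tensorProduct b).ext fun ⟨p, i⟩ => ?_
  fin_cases p
  · simp [h1]
  · simp [hI, two_smul, TensorProduct.neg_tmul]

theorem su2_complexification_embeds_general
    {u : Type*} [LieRing u] [LieAlgebra ℝ u]
    (J : Fin 3 → u) (bJ : Module.Basis (Fin 3) ℝ u) (hbJ : ∀ i, bJ i = J i)
    (φ : (ℂ ⊗[ℝ] u) →ₗ[ℝ] (ℂ ⊗[ℝ] u) × (ℂ ⊗[ℝ] u))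
    (hφJ : ∀ i, φ ((1 : ℂ) ⊗ₜ[ℝ] J i) = (0, (1 : ℂ) ⊗ₜ[ℝ] J i))
    (hφK : ∀ i, φ (Complex.I ⊗ₜ[ℝ] J i) =
      ((2 : ℝ) • (Complex.I ⊗ₜ[ℝ] J i), -(Complex.I ⊗ₜ[ℝ] J i))) :
    Function.Injective φ ∧
      ∀ x y : ℂ ⊗[ℝ] u, φ ⁅x, y⁆ = sdSumBracket (φ x) (φ y) := by
  obtain rfl : φ = (LinearMap.id - Complex.conjAe.toLinearMap.rTensor u).prod
      (Complex.conjAe.toLinearMap.rTensor u) :=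
    eq_prod_sub_conj_of_basis bJ φ (by simpa only [hbJ] using hφJ) (by simpa only [hbJ] using hφK)
  refine ⟨LinearMap.injective_prod_id_sub _, fun x y => ?_⟩
  have hbracket := sdSumBracket_sub_self _ (AlgHom.rTensor_lie (L := u) Complex.conjAe) x y
  exact hbracket.symm

/-- Let `u` be the real Lie algebra with basis `J₁, J₂, J₃` and brackets
`[Jᵢ, Jⱼ] = ε_{ijk} J_k` (so `u ≅ su(2)`), and let `g = ℂ ⊗_ℝ u` be its complexification
with `Kᵢ = i ⊗ Jᵢ`.  Then the `ℝ`-linear map into the semidirect sum `g ⋉ g` determined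
by `Jᵢ ↦ 0 ⊕ Jᵢ` and `Kᵢ ↦ 2Kᵢ ⊕ (−Kᵢ)` is an injective homomorphism of real Lie
algebras. -/
theorem su2_complexification_embeds
    {u : Type*} [LieRing u] [LieAlgebra ℝ u]
    (J : Fin 3 → u) (bJ : Module.Basis (Fin 3) ℝ u) (hbJ : ∀ i, bJ i = J i)
    (hJ : ∀ i j : Fin 3, ⁅J i, J j⁆ = ∑ k, leviCivita i j k • J k)
    (φ : (ℂ ⊗[ℝ] u) →ₗ[ℝ] (ℂ ⊗[ℝ] u) × (ℂ ⊗[ℝ] u))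
    (hφJ : ∀ i, φ ((1 : ℂ) ⊗ₜ[ℝ] J i) = (0, (1 : ℂ) ⊗ₜ[ℝ] J i))
    (hφK : ∀ i, φ (Complex.I ⊗ₜ[ℝ] J i) =
      ((2 : ℝ) • (Complex.I ⊗ₜ[ℝ] J i), -(Complex.I ⊗ₜ[ℝ] J i))) :
    Function.Injective φ ∧
      ∀ x y : ℂ ⊗[ℝ] u, φ ⁅x, y⁆ = sdSumBracket (φ x) (φ y) :=
  su2_complexification_embeds_general J bJ hbJ φ hφJ hφK
end
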